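/- arXiv:0807.1474 — 7 statements merged into one kernel-verified Lean document; each statement's English description precedes it below -/
import Mathlib

section
/- The function y - wq satisfies d(y-wq)/dt = -(y-wq) along solutions of the system dx/dt = -(xw-α₂)x + 1/2, dy/dt = (xw+zq-1)y + α₁wq, dz/dt = -(zq-α₀)z - η/2, dw/dt = (xw-zq-α₂)w + yz, dq/dt = (zq-xw-α₀)q + xy, provided α₀+α₁+α₂ = 1. -/
open Complex

theorem stmt_0_general (α₀ α₁ α₂ : ℂ) (hα : α₀ + α₁ + α₂ = 1)
    (x y z w q : ℝ → ℂ)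
    (hy : ∀ t, HasDerivAt y ((x t * w t + z t * q t - 1) * y t + α₁ * w t * q t) t)
    (hw : ∀ t, HasDerivAt w ((x t * w t - z t * q t - α₂) * w t + y t * z t) t)
    (hq : ∀ t, HasDerivAt q ((z t * q t - x t * w t - α₀) * q t + x t * y t) t) :
    ∀ t, HasDerivAt (fun t => y t - w t * q t) (-(y t - w t * q t)) t := by
  intro t
  have hderiv : HasDerivAt (fun t => y t - w t * q t) _ t := (hy t).sub ((hw t).mul (hq t))
  convert hderiv using 1
  linear_combination (-(w t * q t)) * hα

theorem stmt_0 (α₀ α₁ α₂ η : ℂ) (hα : α₀ + α₁ + α₂ = 1)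
    (x y z w q : ℝ → ℂ)
    (hx : ∀ t, HasDerivAt x (-(x t * w t - α₂) * x t + 1/2) t)
    (hy : ∀ t, HasDerivAt y ((x t * w t + z t * q t - 1) * y t + α₁ * w t * q t) t)
    (hz : ∀ t, HasDerivAt z (-(z t * q t - α₀) * z t - η/2) t)
    (hw : ∀ t, HasDerivAt w ((x t * w t - z t * q t - α₂) * w t + y t * z t) t)
    (hq : ∀ t, HasDerivAt q ((z t * q t - x t * w t - α₀) * q t + x t * y t) t) :
    ∀ t, HasDerivAt (fun t => y t - w t * q t) (-(y t - w t * q t)) t :=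
  stmt_0_general α₀ α₁ α₂ hα x y z w q hy hw hq
end

section
/- If y - wq = e^{-t} at some time t₀ for a solution of the system, then y - wq = C e^{-t} for all t, where C = (y(t₀)-w(t₀)q(t₀))e^{t₀}; in particular y(t) - w(t)q(t) = e^{-t} is preserved: if y-wq equals e^{-t} at one point it equals e^{-t} everywhere. -/
/-!
Differentiating `y - w q` along the system, the `x w` and `z q` terms cancel and, by
`α₀ + α₁ + α₂ = 1`, what remains is `-(y - w q)`. Hence `(y - w q) eᵗ` is constant.
-/

open Complex

theorem eq_mul_exp_neg_of_hasDerivAt_neg {g : ℝ → ℂ} (hg : ∀ t, HasDerivAt g (-g t) t)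
    (t₀ t : ℝ) : g t = (g t₀ * exp (t₀ : ℂ)) * exp (-(t : ℂ)) := by
  have hderiv : ∀ s : ℝ, HasDerivAt (fun s : ℝ => g s * exp (s : ℂ)) 0 s := fun s =>
    ((hg s).mul (hasDerivAt_exp (s : ℂ)).comp_ofReal).congr_deriv (by ring)
  have hconst : g t * exp (t : ℂ) = g t₀ * exp (t₀ : ℂ) :=
    is_const_of_deriv_eq_zero (fun s => (hderiv s).differentiableAt)
      (fun s => (hderiv s).deriv) t t₀
  rw [← hconst, mul_assoc, ← exp_add, add_neg_cancel, exp_zero, mul_one]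

theorem hasDerivAt_sub_mul_eq_neg {α₀ α₁ α₂ : ℂ} (hα : α₀ + α₁ + α₂ = 1)
    {x y z w q : ℝ → ℂ} {t : ℝ}
    (hy : HasDerivAt y ((x t * w t + z t * q t - 1) * y t + α₁ * w t * q t) t)
    (hw : HasDerivAt w ((x t * w t - z t * q t - α₂) * w t + y t * z t) t)
    (hq : HasDerivAt q ((z t * q t - x t * w t - α₀) * q t + x t * y t) t) :
    HasDerivAt (fun s => y s - w s * q s) (-(y t - w t * q t)) t :=
  (hy.sub (hw.mul hq)).congr_deriv (by linear_combination (w t * q t) * hα)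

theorem stmt_1_general (α₀ α₁ α₂ : ℂ) (hα : α₀ + α₁ + α₂ = 1)
    (x y z w q : ℝ → ℂ) (t₀ : ℝ)
    (hy : ∀ t, HasDerivAt y ((x t * w t + z t * q t - 1) * y t + α₁ * w t * q t) t)
    (hw : ∀ t, HasDerivAt w ((x t * w t - z t * q t - α₂) * w t + y t * z t) t)
    (hq : ∀ t, HasDerivAt q ((z t * q t - x t * w t - α₀) * q t + x t * y t) t) :
    (∀ t : ℝ, y t - w t * q t =
      ((y t₀ - w t₀ * q t₀) * Complex.exp (t₀ : ℂ)) * Complex.exp (-(t : ℂ))) ∧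
    (y t₀ - w t₀ * q t₀ = Complex.exp (-(t₀ : ℂ)) →
      ∀ t : ℝ, y t - w t * q t = Complex.exp (-(t : ℂ))) := by
  have hsol : ∀ t : ℝ, y t - w t * q t =
      ((y t₀ - w t₀ * q t₀) * exp (t₀ : ℂ)) * exp (-(t : ℂ)) :=
    eq_mul_exp_neg_of_hasDerivAt_neg
      (fun t => hasDerivAt_sub_mul_eq_neg hα (hy t) (hw t) (hq t)) t₀
  refine ⟨hsol, fun h₀ t => ?_⟩
  rw [hsol t, h₀, ← exp_add, neg_add_cancel, exp_zero, one_mul]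

theorem stmt_1 (α₀ α₁ α₂ η : ℂ) (hα : α₀ + α₁ + α₂ = 1)
    (x y z w q : ℝ → ℂ) (t₀ : ℝ)
    (hx : ∀ t, HasDerivAt x (-(x t * w t - α₂) * x t + 1/2) t)
    (hy : ∀ t, HasDerivAt y ((x t * w t + z t * q t - 1) * y t + α₁ * w t * q t) t)
    (hz : ∀ t, HasDerivAt z (-(z t * q t - α₀) * z t - η/2) t)
    (hw : ∀ t, HasDerivAt w ((x t * w t - z t * q t - α₂) * w t + y t * z t) t)
    (hq : ∀ t, HasDerivAt q ((z t * q t - x t * w t - α₀) * q t + x t * y t) t) :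
    (∀ t : ℝ, y t - w t * q t =
      ((y t₀ - w t₀ * q t₀) * Complex.exp (t₀ : ℂ)) * Complex.exp (-(t : ℂ))) ∧
    (y t₀ - w t₀ * q t₀ = Complex.exp (-(t₀ : ℂ)) →
      ∀ t : ℝ, y t - w t * q t = Complex.exp (-(t : ℂ))) :=
  stmt_1_general α₀ α₁ α₂ hα x y z w q t₀ hy hw hq
end

section
/- The function x(t) = e^{-C₁(t+C₂)}((e^{C₁(t+C₂)} - α₂)² - C₁²)/(4C₁²) solves the second-order ODE x'' = (x')²/x - α₂/2 - 1/(4x), at every point where x(t) ≠ 0, assuming C₁ ≠ 0. -/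
/-!
Writing `E = exp (C₁ (t + C₂))`, the function is `x = (E - 2 α₂ + (α₂² - C₁²) E⁻¹) / (4 C₁²)`, a
combination `A E + B + D E⁻¹`. Such a combination is reproduced by differentiation up to the
factor `k = C₁`, which gives `x'' = C₁² (x - B)` and the first integral
`x'' x - x'² = C₁² (B (x - B) + 4 A D)`. For the coefficients at hand the right-hand side is
`-α₂ x / 2 - 1 / 4`, and dividing by `x` is the equation.
-/

open Complex

namespace Complex

theorem exp_mul_exp_neg (z : ℂ) : exp z * exp (-z) = 1 := by
  rw [← exp_add, add_neg_cancel, exp_zero]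

noncomputable def expTrinomial (A B D k s : ℂ) (t : ℂ) : ℂ :=
  A * exp (k * (t + s)) + B + D * exp (-(k * (t + s)))

variable (A B D k s : ℂ)

theorem hasDerivAt_expTrinomial (t : ℂ) :
    HasDerivAt (expTrinomial A B D k s) (expTrinomial (k * A) 0 (-(k * D)) k s t) t := by
  have hlin : HasDerivAt (fun t => k * (t + s)) k t := by
    simpa using ((hasDerivAt_id t).add_const s).const_mul k
  refine (((hlin.cexp.const_mul A).add_const B).add (hlin.neg.cexp.const_mul D)).congr_deriv ?_
  simp only [expTrinomial, Pi.neg_apply]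
  ring

theorem deriv_expTrinomial :
    deriv (expTrinomial A B D k s) = expTrinomial (k * A) 0 (-(k * D)) k s :=
  funext fun t => (hasDerivAt_expTrinomial A B D k s t).deriv

theorem deriv_deriv_expTrinomial :
    deriv (deriv (expTrinomial A B D k s)) = expTrinomial (k ^ 2 * A) 0 (k ^ 2 * D) k s := by
  rw [deriv_expTrinomial, deriv_expTrinomial]
  congr 1 <;> ring

theorem deriv_deriv_expTrinomial_mul_sub_sq (t : ℂ) :
    deriv (deriv (expTrinomial A B D k s)) t * expTrinomial A B D k s t
        - deriv (expTrinomial A B D k s) t ^ 2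
      = k ^ 2 * (B * (expTrinomial A B D k s t - B) + 4 * A * D) := by
  rw [deriv_deriv_expTrinomial, deriv_expTrinomial]
  simp only [expTrinomial]
  linear_combination 4 * k ^ 2 * A * D * exp_mul_exp_neg (k * (t + s))

end Complex

theorem stmt_4 (α₂ C₁ C₂ : ℂ) (hC : C₁ ≠ 0) (x : ℂ → ℂ)
    (hx : ∀ t : ℂ, x t = Complex.exp (-(C₁*(t+C₂))) *
        ((Complex.exp (C₁*(t+C₂)) - α₂)^2 - C₁^2) / (4*C₁^2)) :
    ∀ t : ℂ, x t ≠ 0 →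
      deriv (deriv x) t = (deriv x t)^2 / x t - α₂/2 - 1/(4 * x t) := by
  have hx_eq : x = expTrinomial (1 / (4 * C₁ ^ 2)) (-α₂ / (2 * C₁ ^ 2))
      ((α₂ ^ 2 - C₁ ^ 2) / (4 * C₁ ^ 2)) C₁ C₂ := by
    funext t
    rw [hx t, expTrinomial]
    field_simp
    linear_combination (2 * exp (C₁ * (t + C₂)) - 4 * α₂) * exp_mul_exp_neg (C₁ * (t + C₂))
  intro t hxt
  have hfirst : deriv (deriv x) t * x t - deriv x t ^ 2 = -α₂ / 2 * x t - 1 / 4 := by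
    rw [hx_eq, deriv_deriv_expTrinomial_mul_sub_sq]
    field_simp
    ring
  field_simp
  linear_combination 8 * hfirst
end

section
/- The function x(t) = e^{-C₁(t+C₂)}(e^{2C₁(t+C₂)}(α₂² - C₁²) - 2α₂ e^{C₁(t+C₂)} + 1)/(4C₁²) solves the ODE x'' = (x')²/x - α₂/2 - 1/(4x) at every point where x(t) ≠ 0, assuming C₁ ≠ 0. -/
set_option maxHeartbeats 1000000

open Complex

theorem stmt_5 (α₂ C₁ C₂ : ℂ) (hC : C₁ ≠ 0) (x : ℂ → ℂ)
    (hx : ∀ t : ℂ, x t = Complex.exp (-(C₁*(t+C₂))) *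
        (Complex.exp (2*C₁*(t+C₂)) * (α₂^2 - C₁^2)
          - 2*α₂*Complex.exp (C₁*(t+C₂)) + 1) / (4*C₁^2)) :
    ∀ t : ℂ, x t ≠ 0 →
      deriv (deriv x) t = (deriv x t)^2 / x t - α₂/2 - 1/(4 * x t) := by
  intro t hxt
  have hexp : ∀ (c s : ℂ), HasDerivAt (fun u => Complex.exp (c*(u+C₂)))
      (Complex.exp (c*(s+C₂)) * c) s := by
    intro c s
    have h := (((hasDerivAt_id s).add_const C₂).const_mul c).cexp
    simpa using h
  have h4C : (4*C₁^2 : ℂ) ≠ 0 := by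
    exact mul_ne_zero (by norm_num) (pow_ne_zero 2 hC)
  obtain ⟨G, hG⟩ : ∃ g : ℂ, (4*C₁^2) * g = 1 := ⟨_, mul_inv_cancel₀ h4C⟩
  have hGv : G = (4*C₁^2)⁻¹ := eq_inv_of_mul_eq_one_right hG
  set A := (α₂^2 - C₁^2) * G with hA
  set B := -2*α₂ * G with hB
  have hxy : x = fun s => A * Complex.exp (C₁*(s+C₂)) + B + G * Complex.exp ((-C₁)*(s+C₂)) := by
    funext s
    rw [hx s]
    have h2 : (2*C₁*(s+C₂)) = C₁*(s+C₂) + C₁*(s+C₂) := by ring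
    have h3 : ((-C₁)*(s+C₂)) = -(C₁*(s+C₂)) := by ring
    rw [h2, h3, Complex.exp_add, Complex.exp_neg, hA, hB, hGv]
    field_simp [Complex.exp_ne_zero, hC]
    ring
  have hd1 : ∀ s, HasDerivAt x
      (A*(Complex.exp (C₁*(s+C₂))*C₁) + G*(Complex.exp ((-C₁)*(s+C₂))*(-C₁))) s := by
    intro s
    rw [hxy]
    exact (((hexp C₁ s).const_mul A).add_const B).add ((hexp (-C₁) s).const_mul G)
  have hdx : deriv x = fun s =>
      A*(Complex.exp (C₁*(s+C₂))*C₁) + G*(Complex.exp ((-C₁)*(s+C₂))*(-C₁)) :=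
    funext fun s => (hd1 s).deriv
  have hd2 : HasDerivAt (deriv x)
      (A*(Complex.exp (C₁*(t+C₂))*C₁*C₁) + G*(Complex.exp ((-C₁)*(t+C₂))*(-C₁)*(-C₁))) t := by
    rw [hdx]
    exact (((hexp C₁ t).mul_const C₁).const_mul A).add
      (((hexp (-C₁) t).mul_const (-C₁)).const_mul G)
  have hxt' : x t ≠ 0 := hxt
  rw [hxy] at hxt'
  simp only at hxt'
  rw [hd2.deriv, hdx, hxy]
  simp only
  have h3 : ((-C₁)*(t+C₂)) = -(C₁*(t+C₂)) := by ring
  rw [h3] at hxt' ⊢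
  set e := Complex.exp (C₁*(t+C₂)) with he
  set f := Complex.exp (-(C₁*(t+C₂))) with hf
  have hef : e * f = 1 := by
    rw [he, hf, ← Complex.exp_add]
    simp
  set X := A * e + B + G * f with hX
  have hX0 : X ≠ 0 := hxt'
  have h4X : (4:ℂ) * X ≠ 0 := mul_ne_zero (by norm_num) hX0
  have key : (A*(e*C₁*C₁) + G*(f*(-C₁)*(-C₁))) * (4*X)
      = 4*(A*(e*C₁) + G*(f*(-C₁)))^2 - 2*α₂*X - 1 := by
    rw [hX, hA, hB]
    linear_combination
      (-2*α₂*((α₂^2-C₁^2)*G*e + G*f) + 4*G*(α₂^2-C₁^2)*e*f - 1) * hG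
      + (4*G*(α₂^2-C₁^2)) * hef
  clear_value A B X
  have step : (A*(e*C₁) + G*(f*(-C₁)))^2 / X - α₂/2 - 1/(4*X)
      = (4*(A*(e*C₁) + G*(f*(-C₁)))^2 - 2*α₂*X - 1)/(4*X) := by
    field_simp
    ring
  rw [step, eq_div_iff h4X]
  linear_combination key
end

section
/- If (x, z, w) solves x' = -(xw-α₂)x + 1/2, z' = α₀z - η/2, w' = (xw-α₂)w, then x satisfies the second-order equation x'' = (x')²/x - α₂/2 - 1/(4x) at points where x ≠ 0. -/
/-! Along the flow, the product `p = x w` satisfies `p' = x' w + x w' = w (x' + (p - α₂) x) = w / 2`.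
Differentiating the `x`-equation therefore gives `x'' = -p/2 - (p - α₂) x'`, and the `x`-equation
itself says `p - α₂ = (1/2 - x') / x`; substituting eliminates `w`. -/

section

variable {𝕜 : Type*} [NontriviallyNormedField 𝕜] {F : Type*} [NormedField F] [NormedAlgebra 𝕜 F]
  {α₂ : F} {x w x' : 𝕜 → F} {t : 𝕜}

theorem hasDerivAt_mul_of_flow (hx : HasDerivAt x (x' t) t)
    (hxeq : x' t = -(x t * w t - α₂) * x t + 1 / 2)
    (hw : HasDerivAt w ((x t * w t - α₂) * w t) t) :
    HasDerivAt (x * w) (w t / 2) t :=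
  (hx.mul hw).congr_deriv (by rw [hxeq]; ring)

theorem hasDerivAt_of_flow (hx : HasDerivAt x (x' t) t)
    (hxeq : ∀ s, x' s = -(x s * w s - α₂) * x s + 1 / 2)
    (hw : HasDerivAt w ((x t * w t - α₂) * w t) t) :
    HasDerivAt x' (-(w t / 2) * x t - (x t * w t - α₂) * x' t) t := by
  have hrhs := (((hasDerivAt_mul_of_flow hx (hxeq t) hw).sub_const α₂).neg.mul hx).add_const
    (1 / 2 : F)
  exact (hrhs.congr_of_eventuallyEq (.of_forall hxeq)).congr_deriv
    (by simp only [Pi.neg_apply, Pi.mul_apply]; ring)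

end

theorem eq_of_flow_of_second_deriv {K : Type*} [Field K] {α₂ x w x' x'' : K} (hx : x ≠ 0)
    (hxeq : x' = -(x * w - α₂) * x + 1 / 2)
    (hx'' : x'' = -(w / 2) * x - (x * w - α₂) * x') :
    x'' = x' ^ 2 / x - α₂ / 2 - 1 / (4 * x) := by
  have hinv : x * x⁻¹ = 1 := mul_inv_cancel₀ hx
  -- `ring` does not identify `4⁻¹` with `2⁻¹ ^ 2` in a field of unknown characteristic
  have h4 : (4 : K)⁻¹ = 2⁻¹ ^ 2 := by rw [inv_pow]; norm_num
  -- substitutes `x w - α₂ = (1/2 - x') x⁻¹`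
  linear_combination hx'' - (1 / 2 + x') * (x⁻¹ * hxeq - (x * w - α₂) * hinv) + x⁻¹ * h4

theorem stmt_6_general (α₂ : ℂ) (x w x' x'' : ℝ → ℂ)
    (hx : ∀ t, HasDerivAt x (x' t) t)
    (hx' : ∀ t, HasDerivAt x' (x'' t) t)
    (hxeq : ∀ t, x' t = -(x t * w t - α₂) * x t + 1/2)
    (hw : ∀ t, HasDerivAt w ((x t * w t - α₂) * w t) t) :
    ∀ t, x t ≠ 0 →
      x'' t = (x' t)^2 / x t - α₂/2 - 1/(4 * x t) := fun t hxt =>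
  eq_of_flow_of_second_deriv hxt (hxeq t) ((hx' t).unique (hasDerivAt_of_flow (hx t) hxeq (hw t)))

theorem stmt_6 (α₀ α₂ η : ℂ) (x z w x' x'' : ℝ → ℂ)
    (hx : ∀ t, HasDerivAt x (x' t) t)
    (hx' : ∀ t, HasDerivAt x' (x'' t) t)
    (hxeq : ∀ t, x' t = -(x t * w t - α₂) * x t + 1/2)
    (hz : ∀ t, HasDerivAt z (α₀ * z t - η/2) t)
    (hw : ∀ t, HasDerivAt w ((x t * w t - α₂) * w t) t) :
    ∀ t, x t ≠ 0 →
      x'' t = (x' t)^2 / x t - α₂/2 - 1/(4 * x t) :=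
  stmt_6_general α₂ x w x' x'' hx hx' hxeq hw
end

section
/- If (x,y,z,w,q) solves the five-dimensional system with y - wq = e^{-t}, then under the change of variables q₁ = w, p₁ = x, q₂ = e^t q, p₂ = z e^{-t}, s = e^{-t}, the functions (q₁,p₁,q₂,p₂) satisfy the Hamiltonian system dq₁/ds = ∂H/∂p₁, dp₁/ds = -∂H/∂q₁, dq₂/ds = ∂H/∂p₂, dp₂/ds = -∂H/∂q₂ with H = -(q₁²p₁² - 2α₂q₁p₁ - q₁)/(2s) - (q₂²p₂² + 2(α₁+α₂)q₂p₂ + ηsq₂)/(2s) - p₁p₂/s. -/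
open Complex

/-! The substitution only rescales `q` and `z` by `eᵗ` and `e⁻ᵗ`. In the equations for `w` and `q`
the constraint `y = wq + e⁻ᵗ` cancels the cubic terms `wzq`, `xwq` and leaves the couplings
`ze⁻ᵗ = p₂` and `xe⁻ᵗ`; differentiating the exponential factors shifts `α₀` by `-1`, and
`α₀ - 1 = -(α₁ + α₂)`. -/

theorem HasDerivAt.cexp_ofReal_mul {f : ℝ → ℂ} {f' : ℂ} {t : ℝ} (hf : HasDerivAt f f' t) :
    HasDerivAt (fun s : ℝ => Complex.exp s * f s) (Complex.exp t * (f t + f')) t := by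
  have hexp : HasDerivAt (fun s : ℝ => Complex.exp s) (Complex.exp t) t := by
    simpa using (hasDerivAt_id t).ofReal_comp.cexp
  exact (hexp.mul hf).congr_deriv (by ring)

theorem HasDerivAt.mul_cexp_neg_ofReal {f : ℝ → ℂ} {f' : ℂ} {t : ℝ} (hf : HasDerivAt f f' t) :
    HasDerivAt (fun s : ℝ => f s * Complex.exp (-s)) ((f' - f t) * Complex.exp (-t)) t := by
  have hexp : HasDerivAt (fun s : ℝ => Complex.exp (-s)) (-Complex.exp (-t)) t := by
    simpa using (hasDerivAt_id t).ofReal_comp.neg.cexp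
  exact (hf.mul hexp).congr_deriv (by ring)

/-- Since `ds/dt = -s`, the equation `dQ/ds = F` reads `dQ/dt = (-s)·F`. -/
theorem stmt_14_general (α₀ α₁ α₂ η : ℂ) (hα : α₀ + α₁ + α₂ = 1)
    (x y z w q : ℝ → ℂ)
    (hx : ∀ t, HasDerivAt x (-(x t * w t - α₂) * x t + 1/2) t)
    (hz : ∀ t, HasDerivAt z (-(z t * q t - α₀) * z t - η/2) t)
    (hw : ∀ t, HasDerivAt w ((x t * w t - z t * q t - α₂) * w t + y t * z t) t)
    (hq : ∀ t, HasDerivAt q ((z t * q t - x t * w t - α₀) * q t + x t * y t) t)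
    (hcon : ∀ t : ℝ, y t - w t * q t = Complex.exp (-(t : ℂ)))
    (Q₁ P₁ Q₂ P₂ S : ℝ → ℂ)
    (hQ₁ : ∀ t, Q₁ t = w t)
    (hP₁ : ∀ t, P₁ t = x t)
    (hQ₂ : ∀ t, Q₂ t = Complex.exp (t : ℂ) * q t)
    (hP₂ : ∀ t, P₂ t = z t * Complex.exp (-(t : ℂ)))
    (hS : ∀ t, S t = Complex.exp (-(t : ℂ))) :
    (∀ t, HasDerivAt Q₁
      (-(S t) * (-(Q₁ t)^2 * P₁ t / S t + α₂ * Q₁ t / S t - P₂ t / S t)) t) ∧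
    (∀ t, HasDerivAt P₁
      (-(S t) * (Q₁ t * (P₁ t)^2 / S t - α₂ * P₁ t / S t - 1/(2 * S t))) t) ∧
    (∀ t, HasDerivAt Q₂
      (-(S t) * (-(Q₂ t)^2 * P₂ t / S t - (α₁ + α₂) * Q₂ t / S t - P₁ t / S t)) t) ∧
    (∀ t, HasDerivAt P₂
      (-(S t) * (Q₂ t * (P₂ t)^2 / S t + (α₁ + α₂) * P₂ t / S t + η/2)) t) := by
  obtain rfl : w = Q₁ := (funext hQ₁).symm
  obtain rfl : x = P₁ := (funext hP₁).symm
  obtain rfl : Q₂ = fun s : ℝ => exp (s : ℂ) * q s := funext hQ₂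
  obtain rfl : P₂ = fun s : ℝ => z s * exp (-(s : ℂ)) := funext hP₂
  obtain rfl : S = fun s : ℝ => exp (-(s : ℂ)) := funext hS
  have hα₁₂ : α₁ + α₂ = 1 - α₀ := by linear_combination hα
  have hy_eq : ∀ t : ℝ, y t = w t * q t + exp (-(t : ℂ)) := fun t => by linear_combination hcon t
  refine ⟨fun t => ?_, fun t => ?_, fun t => ?_, fun t => ?_⟩
  · convert hw t using 1
    rw [hy_eq t]
    field_simp
    ring
  · convert hx t using 1
    field_simp
    ring
  · convert (hq t).cexp_ofReal_mul using 1
    rw [hy_eq t, hα₁₂]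
    simp only [Complex.exp_neg]
    field_simp
    ring
  · convert (hz t).mul_cexp_neg_ofReal using 1
    rw [hα₁₂]
    simp only [Complex.exp_neg]
    field_simp
    ring

/-- Under `q₁ = w, p₁ = x, q₂ = eᵗq, p₂ = ze⁻ᵗ, s = e⁻ᵗ`, the five-dimensional system
with the constraint `y - wq = e⁻ᵗ` becomes the Hamiltonian system with
`H = -(q₁²p₁² - 2α₂q₁p₁ - q₁)/(2s) - (q₂²p₂² + 2(α₁+α₂)q₂p₂ + ηsq₂)/(2s) - p₁p₂/s`.
Since `ds/dt = -s`, the equation `dQ/ds = F` reads `dQ/dt = (-s)·F`. -/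
theorem stmt_14 (α₀ α₁ α₂ η : ℂ) (hα : α₀ + α₁ + α₂ = 1)
    (x y z w q : ℝ → ℂ)
    (hx : ∀ t, HasDerivAt x (-(x t * w t - α₂) * x t + 1/2) t)
    (hy : ∀ t, HasDerivAt y ((x t * w t + z t * q t - 1) * y t + α₁ * w t * q t) t)
    (hz : ∀ t, HasDerivAt z (-(z t * q t - α₀) * z t - η/2) t)
    (hw : ∀ t, HasDerivAt w ((x t * w t - z t * q t - α₂) * w t + y t * z t) t)
    (hq : ∀ t, HasDerivAt q ((z t * q t - x t * w t - α₀) * q t + x t * y t) t)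
    (hcon : ∀ t : ℝ, y t - w t * q t = Complex.exp (-(t : ℂ)))
    (Q₁ P₁ Q₂ P₂ S : ℝ → ℂ)
    (hQ₁ : ∀ t, Q₁ t = w t)
    (hP₁ : ∀ t, P₁ t = x t)
    (hQ₂ : ∀ t, Q₂ t = Complex.exp (t : ℂ) * q t)
    (hP₂ : ∀ t, P₂ t = z t * Complex.exp (-(t : ℂ)))
    (hS : ∀ t, S t = Complex.exp (-(t : ℂ))) :
    (∀ t, HasDerivAt Q₁
      (-(S t) * (-(Q₁ t)^2 * P₁ t / S t + α₂ * Q₁ t / S t - P₂ t / S t)) t) ∧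
    (∀ t, HasDerivAt P₁
      (-(S t) * (Q₁ t * (P₁ t)^2 / S t - α₂ * P₁ t / S t - 1/(2 * S t))) t) ∧
    (∀ t, HasDerivAt Q₂
      (-(S t) * (-(Q₂ t)^2 * P₂ t / S t - (α₁ + α₂) * Q₂ t / S t - P₁ t / S t)) t) ∧
    (∀ t, HasDerivAt P₂
      (-(S t) * (Q₂ t * (P₂ t)^2 / S t + (α₁ + α₂) * P₂ t / S t + η/2)) t) :=
  stmt_14_general α₀ α₁ α₂ η hα x y z w q hx hz hw hq hcon Q₁ P₁ Q₂ P₂ S hQ₁ hP₁ hQ₂ hP₂ hS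
end

section
/- If (q₁,p₁,q₂,p₂) solves the coupled Hamiltonian system with H = -(q₁²p₁² - 2α₂q₁p₁ - q₁)/(2s) - (q₂²p₂² + 2(α₁+α₂)q₂p₂ + ηsq₂)/(2s) - p₁p₂/s, then y := p₁ satisfies y'' = (y')²/y - (1/s)y' - α₂/(2s²) - 1/(4s²y) - y²w/s², where w := p₂, at points where y ≠ 0 and s ≠ 0. -/
/-! Differentiate the equation for `p₁` once more and substitute the equation for `q₁`; the
remaining occurrences of `q₁` are eliminated with the equation for `p₁` itself, which gives
`q₁ p₁² = s p₁' + α₂ p₁ + 1/2`. -/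

open Complex Filter Topology

theorem deriv_deriv_eq_of_eventually_hasDerivAt {f F : ℝ → ℂ} {F' : ℂ} {s : ℝ}
    (hf : ∀ᶠ t in 𝓝 s, HasDerivAt f (F t) t) (hF : HasDerivAt F F' s) :
    deriv (deriv f) s = F' :=
  (hF.congr_of_eventuallyEq (hf.mono fun _ ht => ht.deriv)).deriv

theorem hasDerivAt_riccati_field {q y : ℝ → ℂ} {q' y' a : ℂ} {s : ℝ} (hs : (s : ℂ) ≠ 0)
    (hq : HasDerivAt q q' s) (hy : HasDerivAt y y' s) :
    HasDerivAt (fun t : ℝ => q t * y t ^ 2 / t - a * y t / t - 1 / (2 * t))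
      ((q' * y s ^ 2 + 2 * q s * y s * y') / s - q s * y s ^ 2 / s ^ 2
        - a * y' / s + a * y s / s ^ 2 + 1 / (2 * s ^ 2)) s := by
  have hid : HasDerivAt (fun t : ℝ => (t : ℂ)) 1 s := ofRealCLM.hasDerivAt
  have h2s : 2 * (s : ℂ) ≠ 0 := mul_ne_zero two_ne_zero hs
  refine ((((hq.mul (hy.pow 2)).div hid hs).sub ((hy.const_mul a).div hid hs)).sub
    ((hasDerivAt_const s (1 : ℂ)).div (hid.const_mul 2) h2s)).congr_deriv ?_
  simp only [Pi.mul_apply, Pi.pow_apply]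
  field_simp
  ring

theorem riccati_elimination_identity {K : Type*} [Field K] [CharZero K] {q y y' w a s : K}
    (hs : s ≠ 0) (hy : y ≠ 0) (hy' : y' = q * y ^ 2 / s - a * y / s - 1 / (2 * s)) :
    ((-q ^ 2 * y / s + a * q / s - w / s) * y ^ 2 + 2 * q * y * y') / s - q * y ^ 2 / s ^ 2
        - a * y' / s + a * y / s ^ 2 + 1 / (2 * s ^ 2) =
      y' ^ 2 / y - (1 / s) * y' - a / (2 * s ^ 2) - 1 / (4 * s ^ 2 * y) - y ^ 2 * w / s ^ 2 := by
  subst hy'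
  field_simp
  ring

theorem stmt_19_general (α₂ : ℂ)
    (q₁ p₁ p₂ : ℝ → ℂ)
    (hq₁ : ∀ s : ℝ, s ≠ 0 → HasDerivAt q₁
      (-(q₁ s)^2 * p₁ s / (s:ℂ) + α₂ * q₁ s / (s:ℂ) - p₂ s / (s:ℂ)) s)
    (hp₁ : ∀ s : ℝ, s ≠ 0 → HasDerivAt p₁
      (q₁ s * (p₁ s)^2 / (s:ℂ) - α₂ * p₁ s / (s:ℂ) - 1/(2*(s:ℂ))) s) :
    ∀ s : ℝ, s ≠ 0 → p₁ s ≠ 0 →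
      deriv (deriv p₁) s =
        (deriv p₁ s)^2 / p₁ s - (1/(s:ℂ)) * deriv p₁ s - α₂/(2*(s:ℂ)^2)
          - 1/(4*(s:ℂ)^2 * p₁ s) - (p₁ s)^2 * p₂ s / (s:ℂ)^2 := by
  intro s hs hy
  have hsC : (s : ℂ) ≠ 0 := ofReal_ne_zero.mpr hs
  rw [deriv_deriv_eq_of_eventually_hasDerivAt ((eventually_ne_nhds hs).mono hp₁)
    (hasDerivAt_riccati_field hsC (hq₁ s hs) (hp₁ s hs)), (hp₁ s hs).deriv]
  exact riccati_elimination_identity hsC hy rfl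

/-- For solutions of the coupled Hamiltonian system with
`H = -(q₁²p₁² - 2α₂q₁p₁ - q₁)/(2s) - (q₂²p₂² + 2(α₁+α₂)q₂p₂ + ηsq₂)/(2s) - p₁p₂/s`,
the function `y := p₁` satisfies
`y'' = (y')²/y - y'/s - α₂/(2s²) - 1/(4s²y) - y²w/s²` with `w := p₂`. -/
theorem stmt_19 (α₀ α₁ α₂ η : ℂ) (hα : α₀ + α₁ + α₂ = 1)
    (q₁ p₁ q₂ p₂ : ℝ → ℂ)
    (hq₁ : ∀ s : ℝ, s ≠ 0 → HasDerivAt q₁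
      (-(q₁ s)^2 * p₁ s / (s:ℂ) + α₂ * q₁ s / (s:ℂ) - p₂ s / (s:ℂ)) s)
    (hp₁ : ∀ s : ℝ, s ≠ 0 → HasDerivAt p₁
      (q₁ s * (p₁ s)^2 / (s:ℂ) - α₂ * p₁ s / (s:ℂ) - 1/(2*(s:ℂ))) s)
    (hq₂ : ∀ s : ℝ, s ≠ 0 → HasDerivAt q₂
      (-(q₂ s)^2 * p₂ s / (s:ℂ) - (α₁ + α₂) * q₂ s / (s:ℂ) - p₁ s / (s:ℂ)) s)
    (hp₂ : ∀ s : ℝ, s ≠ 0 → HasDerivAt p₂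
      (q₂ s * (p₂ s)^2 / (s:ℂ) + (α₁ + α₂) * p₂ s / (s:ℂ) + η/2) s) :
    ∀ s : ℝ, s ≠ 0 → p₁ s ≠ 0 →
      deriv (deriv p₁) s =
        (deriv p₁ s)^2 / p₁ s - (1/(s:ℂ)) * deriv p₁ s - α₂/(2*(s:ℂ)^2)
          - 1/(4*(s:ℂ)^2 * p₁ s) - (p₁ s)^2 * p₂ s / (s:ℂ)^2 :=
  stmt_19_general α₂ q₁ p₁ p₂ hq₁ hp₁
end
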